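/- Let E and F be finite-dimensional real inner product spaces and let A, B : E → F be continuous linear maps. Then δ(Γ_A, Γ_B) ≤ 2‖A − B‖, where ‖A − B‖ is the operator norm of A − B. -/

import Mathlib

open Set Filter

/-- The distance `δ(L₁, L₂)`: the Hausdorff distance between `L₁ ∩ 𝕊` and `L₂ ∩ 𝕊`,
where `𝕊` is the unit sphere. -/
noncomputable def sphereDist {X : Type*} [NormedAddCommGroup X] (S T : Set X) : ℝ :=
  Metric.hausdorffDist (S ∩ Metric.sphere 0 1) (T ∩ Metric.sphere 0 1)

/-- The graph `Γ_A = {(u, A u) : u ∈ E}` of a continuous linear map `A : E → F`, as a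
subset of `E × F` equipped with the Euclidean product norm `‖(u,v)‖ = (‖u‖² + ‖v‖²)^(1/2)`. -/
def graphSet {E F : Type*} [NormedAddCommGroup E] [InnerProductSpace ℝ E]
    [NormedAddCommGroup F] [InnerProductSpace ℝ F] (A : E →L[ℝ] F) :
    Set (WithLp 2 (E × F)) :=
  {p | (WithLp.equiv 2 (E × F) p).2 = A (WithLp.equiv 2 (E × F) p).1}

/-!
Given a unit vector `x = (u, A u)` on `Γ_A`, the point `r = (u, B u)` of `Γ_B` differs from it by
`(0, (A - B) u)`, so `‖x - r‖ ≤ ‖A - B‖` because `‖u‖ ≤ ‖x‖ = 1`. Normalizing `r` costs at most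
`|‖r‖ - 1| = |‖r‖ - ‖x‖| ≤ ‖x - r‖` more, and `r / ‖r‖` stays on the sphere and on the graph.
-/

open NormedSpace WithLp

section Normalize

variable {V : Type*} [NormedAddCommGroup V] [NormedSpace ℝ V]

lemma norm_sub_normalize_le (r : V) : ‖r - normalize r‖ ≤ |‖r‖ - 1| := by
  rcases eq_or_ne r 0 with rfl | hr
  · simp
  · have : r - normalize r = (‖r‖ - 1) • normalize r := by
      rw [sub_smul, norm_smul_normalize, one_smul]
    rw [this, norm_smul, norm_normalize hr, Real.norm_eq_abs, mul_one]

lemma dist_normalize_le_two_mul {x : V} (hx : ‖x‖ = 1) (r : V) :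
    dist x (normalize r) ≤ 2 * dist x r :=
  calc dist x (normalize r) ≤ dist x r + ‖r - normalize r‖ :=
        (dist_triangle _ r _).trans_eq (by rw [dist_eq_norm r])
    _ ≤ dist x r + |‖r‖ - ‖x‖| := by rw [hx]; gcongr; exact norm_sub_normalize_le r
    _ ≤ dist x r + dist x r := by
        rw [dist_comm, dist_eq_norm]; gcongr; exact abs_norm_sub_norm_le r x
    _ = 2 * dist x r := by ring

end Normalize

section Graph

variable {E F : Type*} [NormedAddCommGroup E] [InnerProductSpace ℝ E]
  [NormedAddCommGroup F] [InnerProductSpace ℝ F]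

lemma mem_graphSet_iff {A : E →L[ℝ] F} {p : WithLp 2 (E × F)} :
    p ∈ graphSet A ↔ p.snd = A p.fst :=
  Iff.rfl

lemma toLp_mem_graphSet (A : E →L[ℝ] F) (u : E) : toLp 2 (u, A u) ∈ graphSet A :=
  rfl

lemma smul_mem_graphSet {A : E →L[ℝ] F} {p : WithLp 2 (E × F)} (c : ℝ) (hp : p ∈ graphSet A) :
    c • p ∈ graphSet A := by
  rw [mem_graphSet_iff] at hp ⊢
  simp [hp]

lemma eq_toLp_of_mem_graphSet {A : E →L[ℝ] F} {p : WithLp 2 (E × F)} (hp : p ∈ graphSet A) :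
    p = toLp 2 (p.fst, A p.fst) := by
  rw [← mem_graphSet_iff.mp hp]; rfl

lemma dist_toLp_graph (A B : E →L[ℝ] F) (u : E) :
    dist (toLp 2 (u, A u)) (toLp 2 (u, B u)) = ‖(A - B) u‖ := by
  rw [dist_eq_norm, ← toLp_sub, Prod.mk_sub_mk, sub_self, ← sub_apply, norm_toLp_snd]

lemma exists_mem_graphSet_inter_sphere_dist_le (A B : E →L[ℝ] F) {x : WithLp 2 (E × F)}
    (hx : x ∈ graphSet A ∩ Metric.sphere 0 1) :
    ∃ y ∈ graphSet B ∩ Metric.sphere 0 1, dist x y ≤ 2 * ‖A - B‖ := by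
  obtain ⟨hxA, hx1⟩ := hx
  rw [mem_sphere_zero_iff_norm] at hx1
  set u := x.fst
  have hxu : x = toLp 2 (u, A u) := eq_toLp_of_mem_graphSet hxA
  have hr : toLp 2 (u, B u) ≠ 0 := by
    intro h
    have hu : u = 0 := congrArg WithLp.fst h
    rw [hxu, hu, map_zero] at hx1
    simp at hx1
  refine ⟨normalize (toLp 2 (u, B u)), ⟨smul_mem_graphSet _ (toLp_mem_graphSet B u),
    mem_sphere_zero_iff_norm.mpr (norm_normalize hr)⟩, ?_⟩
  calc dist x (normalize (toLp 2 (u, B u))) ≤ 2 * dist x (toLp 2 (u, B u)) :=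
        dist_normalize_le_two_mul hx1 _
    _ = 2 * ‖(A - B) u‖ := by rw [hxu, dist_toLp_graph]
    _ ≤ 2 * ‖A - B‖ := by
        gcongr
        exact (A - B).unit_le_opNorm u ((WithLp.norm_fst_le E x).trans hx1.le)

end Graph

theorem graph_sphereDist_le_general {E F : Type*} [NormedAddCommGroup E] [InnerProductSpace ℝ E]
    [NormedAddCommGroup F] [InnerProductSpace ℝ F]
    (A B : E →L[ℝ] F) :
    sphereDist (graphSet A) (graphSet B) ≤ 2 * ‖A - B‖ := by
  refine Metric.hausdorffDist_le_of_mem_dist (by positivity)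
    (fun x hx => exists_mem_graphSet_inter_sphere_dist_le A B hx) fun x hx => ?_
  obtain ⟨y, hy, hxy⟩ := exists_mem_graphSet_inter_sphere_dist_le B A hx
  exact ⟨y, hy, by rwa [norm_sub_rev] at hxy⟩

/-- The Grassmannian distance between the graphs of two continuous linear maps is at most
twice the operator norm of their difference. -/
theorem graph_sphereDist_le {E F : Type*} [NormedAddCommGroup E] [InnerProductSpace ℝ E]
    [NormedAddCommGroup F] [InnerProductSpace ℝ F]
    [FiniteDimensional ℝ E] [FiniteDimensional ℝ F]
    (A B : E →L[ℝ] F) :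
    sphereDist (graphSet A) (graphSet B) ≤ 2 * ‖A - B‖ :=
  graph_sphereDist_le_general A B
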